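/- arXiv:1505.06740 — 7 statements merged into one kernel-verified Lean document; each statement's English description precedes it below -/
import Mathlib

section
/- Let n ≥ 1 and let φ : 𝕋ₙ → ℝ⁵ be the map sending (a,b,c,d) to (S₀, S₁, S₀₀, S₀₁, S₁₁). For every p = (a,b,c,d) ∈ 𝕋ₙ, the point φ(p) is an extreme point of the convex hull of the image φ(𝕋ₙ) in ℝ⁵ if and only if p ∈ ∂𝕋ₙ, i.e. if and only if a·b·c·d = 0. -/
noncomputable section

/-- The map `φ` sending `(a,b,c,d) ∈ 𝕋ₙ` to `(S₀, S₁, S₀₀, S₀₁, S₁₁) ∈ ℝ⁵`, where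
`S₀ = a+b-c-d`, `S₁ = a-b+c-d`, `Z = a-b-c+d`, `S₀₀ = S₀²-n`, `S₀₁ = S₀S₁-Z`, `S₁₁ = S₁²-n`. -/
def phiMap (n : ℕ) (a b c d : ℤ) : Fin 5 → ℝ :=
  ![((a + b - c - d : ℤ) : ℝ),
    ((a - b + c - d : ℤ) : ℝ),
    ((a + b - c - d : ℤ) : ℝ) ^ 2 - n,
    ((a + b - c - d : ℤ) : ℝ) * ((a - b + c - d : ℤ) : ℝ) - ((a - b - c + d : ℤ) : ℝ),
    ((a - b + c - d : ℤ) : ℝ) ^ 2 - n]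

/-- The image `φ(𝕋ₙ)` where `𝕋ₙ = {(a,b,c,d) ∈ ℤ⁴ : a,b,c,d ≥ 0, a+b+c+d = n}`. -/
def phiImage (n : ℕ) : Set (Fin 5 → ℝ) :=
  {v | ∃ a b c d : ℤ, 0 ≤ a ∧ 0 ≤ b ∧ 0 ≤ c ∧ 0 ≤ d ∧ a + b + c + d = n ∧
    v = phiMap n a b c d}

def lmap (c : Fin 5 → ℝ) : (Fin 5 → ℝ) →ₗ[ℝ] ℝ :=
  ∑ i : Fin 5, c i • LinearMap.proj i

lemma lmap_apply (c v : Fin 5 → ℝ) : lmap c v = ∑ i : Fin 5, c i * v i := by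
  simp [lmap, LinearMap.sum_apply]

lemma mem_extremePoints_of_forall_lt (S : Set (Fin 5 → ℝ)) (x : Fin 5 → ℝ)
    (hx : x ∈ S) (l : (Fin 5 → ℝ) →ₗ[ℝ] ℝ)
    (h : ∀ y ∈ S, y ≠ x → l y < l x) :
    x ∈ Set.extremePoints ℝ (convexHull ℝ S) := by
  have hxc : x ∈ convexHull ℝ S := subset_convexHull ℝ S hx
  have hle : ∀ y ∈ convexHull ℝ S, l y ≤ l x := by
    intro y hy
    have hsub : convexHull ℝ S ⊆ {z | l z ≤ l x} := by
      apply convexHull_min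
      · intro z hz
        by_cases hzx : z = x
        · simp [hzx]
        · exact (h z hz hzx).le
      · exact convex_halfSpace_le l.isLinear (l x)
    exact hsub hy
  have heq : ∀ y ∈ convexHull ℝ S, l y = l x → y = x := by
    intro y hy hly
    rw [convexHull_eq] at hy
    obtain ⟨ι, t, w, z, hw0, hw1, hz, hyc⟩ := hy
    have hz' : ∀ i ∈ t, w i • z i = w i • x := by
      by_contra hcon
      push_neg at hcon
      obtain ⟨i0, hi0, hne⟩ := hcon
      have hwi0 : 0 < w i0 := by
        rcases (hw0 i0 hi0).lt_or_eq with h' | h'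
        · exact h'
        · exact absurd (by rw [← h']; simp) hne
      have hzi0 : z i0 ≠ x := fun h' => hne (by rw [h'])
      have hlt : ∑ i ∈ t, w i * l (z i) < ∑ i ∈ t, w i * l x := by
        apply Finset.sum_lt_sum
        · intro i hi
          exact mul_le_mul_of_nonneg_left
            (hle (z i) (subset_convexHull ℝ S (hz i hi))) (hw0 i hi)
        · exact ⟨i0, hi0, mul_lt_mul_of_pos_left (h (z i0) (hz i0 hi0) hzi0) hwi0⟩
      have hly' : l y = ∑ i ∈ t, w i * l (z i) := by
        rw [← hyc, Finset.centerMass_eq_of_sum_1 t z hw1, map_sum]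
        simp [smul_eq_mul]
      have hsum : ∑ i ∈ t, w i * l x = l x := by
        rw [← Finset.sum_mul, hw1, one_mul]
      rw [hly'] at hly
      rw [hsum] at hlt
      exact absurd hly (ne_of_lt hlt)
    have : y = ∑ i ∈ t, w i • z i := by
      rw [← hyc, Finset.centerMass_eq_of_sum_1 t z hw1]
    rw [this, Finset.sum_congr rfl hz']
    rw [← Finset.sum_smul, hw1, one_smul]
  rw [mem_extremePoints]
  refine ⟨hxc, ?_⟩
  intro x₁ hx₁ x₂ hx₂ hseg
  obtain ⟨t₁, t₂, ht₁, ht₂, hts, hx'⟩ := hseg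
  have h1 : l x₁ ≤ l x := hle x₁ hx₁
  have h2 : l x₂ ≤ l x := hle x₂ hx₂
  have hlx : t₁ * l x₁ + t₂ * l x₂ = l x := by
    rw [← hx']; simp [smul_eq_mul]
  have c3 : t₁ * l x + t₂ * l x = l x := by rw [← add_mul, hts, one_mul]
  have he1 : l x₁ = l x := by
    by_contra h'
    have a' := lt_of_le_of_ne h1 h'
    have c1 := mul_lt_mul_of_pos_left a' ht₁
    have c2 := mul_le_mul_of_nonneg_left h2 ht₂.le
    linarith
  have he2 : l x₂ = l x := by
    by_contra h'
    have a' := lt_of_le_of_ne h2 h'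
    have c1 := mul_lt_mul_of_pos_left a' ht₂
    have c2 := mul_le_mul_of_nonneg_left h1 ht₁.le
    linarith
  exact ⟨heq x₁ hx₁ he1, heq x₂ hx₂ he2⟩

lemma intlem (u v w : ℤ) (hw : 0 ≤ w) (h : ¬(u = 0 ∧ v = 0 ∧ w = 0)) :
    1 ≤ u^2 - u*v + v^2 + 4*w := by
  have hq : 0 ≤ u^2 - u*v + v^2 := by nlinarith [sq_nonneg (u-v), sq_nonneg u, sq_nonneg v]
  by_contra hlt
  push_neg at hlt
  have hw0 : w = 0 := by linarith
  have hq0 : u^2 - u*v + v^2 = 0 := by linarith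
  have hv2 : v^2 ≤ 0 := by nlinarith [sq_nonneg (2*u - v)]
  have hv : v = 0 := by
    have : v^2 = 0 := le_antisymm hv2 (sq_nonneg v)
    exact pow_eq_zero_iff (by norm_num) |>.mp this
  have hu : u = 0 := by
    have : u^2 = 0 := by rw [hv] at hq0; linarith
    exact pow_eq_zero_iff (by norm_num) |>.mp this
  exact h ⟨hu, hv, hw0⟩

lemma case_d (n : ℕ) (a b c d : ℤ) (ha : 0 ≤ a) (hb : 0 ≤ b) (hc : 0 ≤ c) (hd : 0 ≤ d)
    (hsum : a + b + c + d = n) (h0 : d = 0) :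
    phiMap n a b c d ∈ Set.extremePoints ℝ (convexHull ℝ (phiImage n)) := by
  refine mem_extremePoints_of_forall_lt (phiImage n) _ ⟨a,b,c,d,ha,hb,hc,hd,hsum,rfl⟩
    (lmap ![(((1 + 2*(a+b-c-d) - (a-b+c-d)) : ℤ) : ℝ), (((1 + 2*(a-b+c-d) - (a+b-c-d)) : ℤ) : ℝ), -1, (1 : ℝ), -1]) ?_
  rintro y ⟨A,B,C,D,hA,hB,hC,hD,hS,rfl⟩ hne
  have hnz : ¬((A+B-C-D) - (a+b-c-d) = 0 ∧ (A-B+C-D) - (a-b+c-d) = 0 ∧ D = 0) := by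
    rintro ⟨h1, h2, h3⟩
    have e1 : A = a := by omega
    have e2 : B = b := by omega
    have e3 : C = c := by omega
    have e4 : D = d := by omega
    rw [e1, e2, e3, e4] at hne
    exact hne rfl
  have hkey0 := intlem ((A+B-C-D) - (a+b-c-d)) ((A-B+C-D) - (a-b+c-d)) D hD hnz
  have hkey := hkey0
  have hq : lmap ![(((1 + 2*(a+b-c-d) - (a-b+c-d)) : ℤ) : ℝ), (((1 + 2*(a-b+c-d) - (a+b-c-d)) : ℤ) : ℝ), -1, (1 : ℝ), -1] (phiMap n A B C D)
      = ((((1 + 2*(a+b-c-d) - (a-b+c-d)) * (A+B-C-D) + (1 + 2*(a-b+c-d) - (a+b-c-d)) * (A-B+C-D) - ((A+B-C-D)^2 - (n:ℤ)) + (1) * ((A+B-C-D)*(A-B+C-D) - (A-B-C+D)) - ((A-B+C-D)^2 - (n:ℤ))) : ℤ) : ℝ) := by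
    rw [lmap_apply]
    simp [phiMap, Fin.sum_univ_five]
    push_cast
    ring
  have hp : lmap ![(((1 + 2*(a+b-c-d) - (a-b+c-d)) : ℤ) : ℝ), (((1 + 2*(a-b+c-d) - (a+b-c-d)) : ℤ) : ℝ), -1, (1 : ℝ), -1] (phiMap n a b c d)
      = ((((1 + 2*(a+b-c-d) - (a-b+c-d)) * (a+b-c-d) + (1 + 2*(a-b+c-d) - (a+b-c-d)) * (a-b+c-d) - ((a+b-c-d)^2 - (n:ℤ)) + (1) * ((a+b-c-d)*(a-b+c-d) - (a-b-c+d)) - ((a-b+c-d)^2 - (n:ℤ))) : ℤ) : ℝ) := by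
    rw [lmap_apply]
    simp [phiMap, Fin.sum_univ_five]
    push_cast
    ring
  rw [hq, hp]
  have hid : ((1 + 2*(a+b-c-d) - (a-b+c-d)) * (a+b-c-d) + (1 + 2*(a-b+c-d) - (a+b-c-d)) * (a-b+c-d) - ((a+b-c-d)^2 - (n:ℤ)) + (1) * ((a+b-c-d)*(a-b+c-d) - (a-b-c+d)) - ((a-b+c-d)^2 - (n:ℤ))) - ((1 + 2*(a+b-c-d) - (a-b+c-d)) * (A+B-C-D) + (1 + 2*(a-b+c-d) - (a+b-c-d)) * (A-B+C-D) - ((A+B-C-D)^2 - (n:ℤ)) + (1) * ((A+B-C-D)*(A-B+C-D) - (A-B-C+D)) - ((A-B+C-D)^2 - (n:ℤ))) = (((A+B-C-D) - (a+b-c-d))^2 - ((A+B-C-D) - (a+b-c-d)) * ((A-B+C-D) - (a-b+c-d)) + ((A-B+C-D) - (a-b+c-d))^2 + 4*D) := by linear_combination hsum - hS - 4*h0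
  exact_mod_cast (by linarith : (((1 + 2*(a+b-c-d) - (a-b+c-d)) * (A+B-C-D) + (1 + 2*(a-b+c-d) - (a+b-c-d)) * (A-B+C-D) - ((A+B-C-D)^2 - (n:ℤ)) + (1) * ((A+B-C-D)*(A-B+C-D) - (A-B-C+D)) - ((A-B+C-D)^2 - (n:ℤ))) : ℤ) < ((1 + 2*(a+b-c-d) - (a-b+c-d)) * (a+b-c-d) + (1 + 2*(a-b+c-d) - (a+b-c-d)) * (a-b+c-d) - ((a+b-c-d)^2 - (n:ℤ)) + (1) * ((a+b-c-d)*(a-b+c-d) - (a-b-c+d)) - ((a-b+c-d)^2 - (n:ℤ))))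

lemma case_a (n : ℕ) (a b c d : ℤ) (ha : 0 ≤ a) (hb : 0 ≤ b) (hc : 0 ≤ c) (hd : 0 ≤ d)
    (hsum : a + b + c + d = n) (h0 : a = 0) :
    phiMap n a b c d ∈ Set.extremePoints ℝ (convexHull ℝ (phiImage n)) := by
  refine mem_extremePoints_of_forall_lt (phiImage n) _ ⟨a,b,c,d,ha,hb,hc,hd,hsum,rfl⟩
    (lmap ![(((2*(a+b-c-d) - (a-b+c-d) - 1) : ℤ) : ℝ), (((2*(a-b+c-d) - (a+b-c-d) - 1) : ℤ) : ℝ), -1, (1 : ℝ), -1]) ?_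
  rintro y ⟨A,B,C,D,hA,hB,hC,hD,hS,rfl⟩ hne
  have hnz : ¬((A+B-C-D) - (a+b-c-d) = 0 ∧ (A-B+C-D) - (a-b+c-d) = 0 ∧ A = 0) := by
    rintro ⟨h1, h2, h3⟩
    have e1 : A = a := by omega
    have e2 : B = b := by omega
    have e3 : C = c := by omega
    have e4 : D = d := by omega
    rw [e1, e2, e3, e4] at hne
    exact hne rfl
  have hkey0 := intlem ((A+B-C-D) - (a+b-c-d)) ((A-B+C-D) - (a-b+c-d)) A hA hnz
  have hkey := hkey0
  have hq : lmap ![(((2*(a+b-c-d) - (a-b+c-d) - 1) : ℤ) : ℝ), (((2*(a-b+c-d) - (a+b-c-d) - 1) : ℤ) : ℝ), -1, (1 : ℝ), -1] (phiMap n A B C D)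
      = ((((2*(a+b-c-d) - (a-b+c-d) - 1) * (A+B-C-D) + (2*(a-b+c-d) - (a+b-c-d) - 1) * (A-B+C-D) - ((A+B-C-D)^2 - (n:ℤ)) + (1) * ((A+B-C-D)*(A-B+C-D) - (A-B-C+D)) - ((A-B+C-D)^2 - (n:ℤ))) : ℤ) : ℝ) := by
    rw [lmap_apply]
    simp [phiMap, Fin.sum_univ_five]
    push_cast
    ring
  have hp : lmap ![(((2*(a+b-c-d) - (a-b+c-d) - 1) : ℤ) : ℝ), (((2*(a-b+c-d) - (a+b-c-d) - 1) : ℤ) : ℝ), -1, (1 : ℝ), -1] (phiMap n a b c d)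
      = ((((2*(a+b-c-d) - (a-b+c-d) - 1) * (a+b-c-d) + (2*(a-b+c-d) - (a+b-c-d) - 1) * (a-b+c-d) - ((a+b-c-d)^2 - (n:ℤ)) + (1) * ((a+b-c-d)*(a-b+c-d) - (a-b-c+d)) - ((a-b+c-d)^2 - (n:ℤ))) : ℤ) : ℝ) := by
    rw [lmap_apply]
    simp [phiMap, Fin.sum_univ_five]
    push_cast
    ring
  rw [hq, hp]
  have hid : ((2*(a+b-c-d) - (a-b+c-d) - 1) * (a+b-c-d) + (2*(a-b+c-d) - (a+b-c-d) - 1) * (a-b+c-d) - ((a+b-c-d)^2 - (n:ℤ)) + (1) * ((a+b-c-d)*(a-b+c-d) - (a-b-c+d)) - ((a-b+c-d)^2 - (n:ℤ))) - ((2*(a+b-c-d) - (a-b+c-d) - 1) * (A+B-C-D) + (2*(a-b+c-d) - (a+b-c-d) - 1) * (A-B+C-D) - ((A+B-C-D)^2 - (n:ℤ)) + (1) * ((A+B-C-D)*(A-B+C-D) - (A-B-C+D)) - ((A-B+C-D)^2 - (n:ℤ))) = (((A+B-C-D) - (a+b-c-d))^2 - ((A+B-C-D) - (a+b-c-d)) *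 ((A-B+C-D) - (a-b+c-d)) + ((A-B+C-D) - (a-b+c-d))^2 + 4*A) := by linear_combination hsum - hS - 4*h0
  exact_mod_cast (by linarith : (((2*(a+b-c-d) - (a-b+c-d) - 1) * (A+B-C-D) + (2*(a-b+c-d) - (a+b-c-d) - 1) * (A-B+C-D) - ((A+B-C-D)^2 - (n:ℤ)) + (1) * ((A+B-C-D)*(A-B+C-D) - (A-B-C+D)) - ((A-B+C-D)^2 - (n:ℤ))) : ℤ) < ((2*(a+b-c-d) - (a-b+c-d) - 1) * (a+b-c-d) + (2*(a-b+c-d) - (a+b-c-d) - 1) * (a-b+c-d) - ((a+b-c-d)^2 - (n:ℤ)) + (1) * ((a+b-c-d)*(a-b+c-d) - (a-b-c+d)) - ((a-b+c-d)^2 - (n:ℤ))))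

lemma case_b (n : ℕ) (a b c d : ℤ) (ha : 0 ≤ a) (hb : 0 ≤ b) (hc : 0 ≤ c) (hd : 0 ≤ d)
    (hsum : a + b + c + d = n) (h0 : b = 0) :
    phiMap n a b c d ∈ Set.extremePoints ℝ (convexHull ℝ (phiImage n)) := by
  refine mem_extremePoints_of_forall_lt (phiImage n) _ ⟨a,b,c,d,ha,hb,hc,hd,hsum,rfl⟩
    (lmap ![(((2*(a+b-c-d) + (a-b+c-d) - 1) : ℤ) : ℝ), ((((a+b-c-d) + 2*(a-b+c-d) + 1) : ℤ) : ℝ), -1, (-1 : ℝ), -1]) ?_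
  rintro y ⟨A,B,C,D,hA,hB,hC,hD,hS,rfl⟩ hne
  have hnz : ¬((A+B-C-D) - (a+b-c-d) = 0 ∧ (A-B+C-D) - (a-b+c-d) = 0 ∧ B = 0) := by
    rintro ⟨h1, h2, h3⟩
    have e1 : A = a := by omega
    have e2 : B = b := by omega
    have e3 : C = c := by omega
    have e4 : D = d := by omega
    rw [e1, e2, e3, e4] at hne
    exact hne rfl
  have hkey0 := intlem ((A+B-C-D) - (a+b-c-d)) (-((A-B+C-D) - (a-b+c-d))) B hB (by rintro ⟨h1,h2,h3⟩; exact hnz ⟨h1, by linarith, h3⟩)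
  have hkey : 1 ≤ (((A+B-C-D) - (a+b-c-d))^2 + ((A+B-C-D) - (a+b-c-d)) * ((A-B+C-D) - (a-b+c-d)) + ((A-B+C-D) - (a-b+c-d))^2 + 4*B) := by nlinarith [hkey0]
  have hq : lmap ![(((2*(a+b-c-d) + (a-b+c-d) - 1) : ℤ) : ℝ), ((((a+b-c-d) + 2*(a-b+c-d) + 1) : ℤ) : ℝ), -1, (-1 : ℝ), -1] (phiMap n A B C D)
      = ((((2*(a+b-c-d) + (a-b+c-d) - 1) * (A+B-C-D) + ((a+b-c-d) + 2*(a-b+c-d) + 1) * (A-B+C-D) - ((A+B-C-D)^2 - (n:ℤ)) + (-1) * ((A+B-C-D)*(A-B+C-D) - (A-B-C+D)) - ((A-B+C-D)^2 - (n:ℤ))) : ℤ) : ℝ) := by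
    rw [lmap_apply]
    simp [phiMap, Fin.sum_univ_five]
    push_cast
    ring
  have hp : lmap ![(((2*(a+b-c-d) + (a-b+c-d) - 1) : ℤ) : ℝ), ((((a+b-c-d) + 2*(a-b+c-d) + 1) : ℤ) : ℝ), -1, (-1 : ℝ), -1] (phiMap n a b c d)
      = ((((2*(a+b-c-d) + (a-b+c-d) - 1) * (a+b-c-d) + ((a+b-c-d) + 2*(a-b+c-d) + 1) * (a-b+c-d) - ((a+b-c-d)^2 - (n:ℤ)) + (-1) * ((a+b-c-d)*(a-b+c-d) - (a-b-c+d)) - ((a-b+c-d)^2 - (n:ℤ))) : ℤ) : ℝ) := by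
    rw [lmap_apply]
    simp [phiMap, Fin.sum_univ_five]
    push_cast
    ring
  rw [hq, hp]
  have hid : ((2*(a+b-c-d) + (a-b+c-d) - 1) * (a+b-c-d) + ((a+b-c-d) + 2*(a-b+c-d) + 1) * (a-b+c-d) - ((a+b-c-d)^2 - (n:ℤ)) + (-1) * ((a+b-c-d)*(a-b+c-d) - (a-b-c+d)) - ((a-b+c-d)^2 - (n:ℤ))) - ((2*(a+b-c-d) + (a-b+c-d) - 1) * (A+B-C-D) + ((a+b-c-d) + 2*(a-b+c-d) + 1) * (A-B+C-D) - ((A+B-C-D)^2 - (n:ℤ)) + (-1) * ((A+B-C-D)*(A-B+C-D) - (A-B-C+D)) - ((A-B+C-D)^2 - (n:ℤ))) = (((A+B-C-D) - (a+b-c-d))^2 + ((A+B-C-D) - (a+b-c-d)) * ((A-B+C-D) - (a-b+c-d)) + ((A-B+C-D) - (a-b+c-d))^2 + 4*B) := by linear_combination hsum - hS - 4*h0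
  exact_mod_cast (by linarith : (((2*(a+b-c-d) + (a-b+c-d) - 1) * (A+B-C-D) + ((a+b-c-d) + 2*(a-b+c-d) + 1) * (A-B+C-D) - ((A+B-C-D)^2 - (n:ℤ)) + (-1) * ((A+B-C-D)*(A-B+C-D) - (A-B-C+D)) - ((A-B+C-D)^2 - (n:ℤ))) : ℤ) < ((2*(a+b-c-d) + (a-b+c-d) - 1) * (a+b-c-d) + ((a+b-c-d) + 2*(a-b+c-d) + 1) * (a-b+c-d) - ((a+b-c-d)^2 - (n:ℤ)) + (-1) * ((a+b-c-d)*(a-b+c-d) - (a-b-c+d)) - ((a-b+c-d)^2 - (n:ℤ))))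

lemma case_c (n : ℕ) (a b c d : ℤ) (ha : 0 ≤ a) (hb : 0 ≤ b) (hc : 0 ≤ c) (hd : 0 ≤ d)
    (hsum : a + b + c + d = n) (h0 : c = 0) :
    phiMap n a b c d ∈ Set.extremePoints ℝ (convexHull ℝ (phiImage n)) := by
  refine mem_extremePoints_of_forall_lt (phiImage n) _ ⟨a,b,c,d,ha,hb,hc,hd,hsum,rfl⟩
    (lmap ![(((2*(a+b-c-d) + (a-b+c-d) + 1) : ℤ) : ℝ), ((((a+b-c-d) + 2*(a-b+c-d) - 1) : ℤ) : ℝ), -1, (-1 : ℝ), -1]) ?_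
  rintro y ⟨A,B,C,D,hA,hB,hC,hD,hS,rfl⟩ hne
  have hnz : ¬((A+B-C-D) - (a+b-c-d) = 0 ∧ (A-B+C-D) - (a-b+c-d) = 0 ∧ C = 0) := by
    rintro ⟨h1, h2, h3⟩
    have e1 : A = a := by omega
    have e2 : B = b := by omega
    have e3 : C = c := by omega
    have e4 : D = d := by omega
    rw [e1, e2, e3, e4] at hne
    exact hne rfl
  have hkey0 := intlem ((A+B-C-D) - (a+b-c-d)) (-((A-B+C-D) - (a-b+c-d))) C hC (by rintro ⟨h1,h2,h3⟩; exact hnz ⟨h1, by linarith, h3⟩)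
  have hkey : 1 ≤ (((A+B-C-D) - (a+b-c-d))^2 + ((A+B-C-D) - (a+b-c-d)) * ((A-B+C-D) - (a-b+c-d)) + ((A-B+C-D) - (a-b+c-d))^2 + 4*C) := by nlinarith [hkey0]
  have hq : lmap ![(((2*(a+b-c-d) + (a-b+c-d) + 1) : ℤ) : ℝ), ((((a+b-c-d) + 2*(a-b+c-d) - 1) : ℤ) : ℝ), -1, (-1 : ℝ), -1] (phiMap n A B C D)
      = ((((2*(a+b-c-d) + (a-b+c-d) + 1) * (A+B-C-D) + ((a+b-c-d) + 2*(a-b+c-d) - 1) * (A-B+C-D) - ((A+B-C-D)^2 - (n:ℤ)) + (-1) * ((A+B-C-D)*(A-B+C-D) - (A-B-C+D)) - ((A-B+C-D)^2 - (n:ℤ))) : ℤ) : ℝ) := by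
    rw [lmap_apply]
    simp [phiMap, Fin.sum_univ_five]
    push_cast
    ring
  have hp : lmap ![(((2*(a+b-c-d) + (a-b+c-d) + 1) : ℤ) : ℝ), ((((a+b-c-d) + 2*(a-b+c-d) - 1) : ℤ) : ℝ), -1, (-1 : ℝ), -1] (phiMap n a b c d)
      = ((((2*(a+b-c-d) + (a-b+c-d) + 1) * (a+b-c-d) + ((a+b-c-d) + 2*(a-b+c-d) - 1) * (a-b+c-d) - ((a+b-c-d)^2 - (n:ℤ)) + (-1) * ((a+b-c-d)*(a-b+c-d) - (a-b-c+d)) - ((a-b+c-d)^2 - (n:ℤ))) : ℤ) : ℝ) := by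
    rw [lmap_apply]
    simp [phiMap, Fin.sum_univ_five]
    push_cast
    ring
  rw [hq, hp]
  have hid : ((2*(a+b-c-d) + (a-b+c-d) + 1) * (a+b-c-d) + ((a+b-c-d) + 2*(a-b+c-d) - 1) * (a-b+c-d) - ((a+b-c-d)^2 - (n:ℤ)) + (-1) * ((a+b-c-d)*(a-b+c-d) - (a-b-c+d)) - ((a-b+c-d)^2 - (n:ℤ))) - ((2*(a+b-c-d) + (a-b+c-d) + 1) * (A+B-C-D) + ((a+b-c-d) + 2*(a-b+c-d) - 1) * (A-B+C-D) - ((A+B-C-D)^2 - (n:ℤ)) + (-1) * ((A+B-C-D)*(A-B+C-D) - (A-B-C+D)) - ((A-B+C-D)^2 - (n:ℤ))) = (((A+B-C-D) - (a+b-c-d))^2 + ((A+B-C-D) - (a+b-c-d)) * ((A-B+C-D) - (a-b+c-d)) + ((A-B+C-D) - (a-b+c-d))^2 + 4*C) := by linear_combination hsum - hS - 4*h0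
  exact_mod_cast (by linarith : (((2*(a+b-c-d) + (a-b+c-d) + 1) * (A+B-C-D) + ((a+b-c-d) + 2*(a-b+c-d) - 1) * (A-B+C-D) - ((A+B-C-D)^2 - (n:ℤ)) + (-1) * ((A+B-C-D)*(A-B+C-D) - (A-B-C+D)) - ((A-B+C-D)^2 - (n:ℤ))) : ℤ) < ((2*(a+b-c-d) + (a-b+c-d) + 1) * (a+b-c-d) + ((a+b-c-d) + 2*(a-b+c-d) - 1) * (a-b+c-d) - ((a+b-c-d)^2 - (n:ℤ)) + (-1) * ((a+b-c-d)*(a-b+c-d) - (a-b-c+d)) - ((a-b+c-d)^2 - (n:ℤ))))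

/-- For `p = (a,b,c,d) ∈ 𝕋ₙ`, `φ(p)` is an extreme point of the convex hull of `φ(𝕋ₙ)`
iff `a·b·c·d = 0`. -/
theorem stmt_0 (n : ℕ) (hn : 1 ≤ n) (a b c d : ℤ)
    (ha : 0 ≤ a) (hb : 0 ≤ b) (hc : 0 ≤ c) (hd : 0 ≤ d)
    (hsum : a + b + c + d = n) :
    phiMap n a b c d ∈ Set.extremePoints ℝ (convexHull ℝ (phiImage n)) ↔
      a * b * c * d = 0 := by
  constructor
  · intro hx
    by_contra habcd
    have ha' : a ≠ 0 := fun h => habcd (by rw [h]; ring)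
    have hb' : b ≠ 0 := fun h => habcd (by rw [h]; ring)
    have hc' : c ≠ 0 := fun h => habcd (by rw [h]; ring)
    have hd' : d ≠ 0 := fun h => habcd (by rw [h]; ring)
    have hy1 : phiMap n (a+1) (b-1) (c-1) (d+1) ∈ phiImage n :=
      ⟨a+1, b-1, c-1, d+1, by omega, by omega, by omega, by omega, by omega, rfl⟩
    have hy2 : phiMap n (a-1) (b+1) (c+1) (d-1) ∈ phiImage n :=
      ⟨a-1, b+1, c+1, d-1, by omega, by omega, by omega, by omega, by omega, rfl⟩
    have hseg : phiMap n a b c d ∈ openSegment ℝ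
        (phiMap n (a+1) (b-1) (c-1) (d+1)) (phiMap n (a-1) (b+1) (c+1) (d-1)) := by
      refine ⟨1/2, 1/2, by norm_num, by norm_num, by norm_num, ?_⟩
      funext i
      fin_cases i <;>
        simp [phiMap, Pi.add_apply, Pi.smul_apply, smul_eq_mul] <;>
        push_cast <;> ring
    obtain ⟨he1, he2⟩ := (mem_extremePoints.mp hx).2 _ (subset_convexHull ℝ _ hy1)
      _ (subset_convexHull ℝ _ hy2) hseg
    have hco := congrFun he1 3
    simp [phiMap] at hco
    push_cast at hco
    nlinarith [hco]
  · intro h0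
    rcases mul_eq_zero.mp h0 with h | h
    · rcases mul_eq_zero.mp h with h | h
      · rcases mul_eq_zero.mp h with h | h
        · exact case_a n a b c d ha hb hc hd hsum h
        · exact case_b n a b c d ha hb hc hd hsum h
      · exact case_c n a b c d ha hb hc hd hsum h
    · exact case_d n a b c d ha hb hc hd hsum h
end
end

section
/- Let n ≥ 1, let σ, η ∈ {−1, 1}, and let x, y, μ be natural numbers such that μ has opposite parity to x when n is even and μ has opposite parity to y when n is odd. Set α = x·(σμ + η(x+y)), β = μ·y, γ = x², δ = σ·x·y, ε = y², and βc = (1/2)·[n(x+y)² + (σμ + ηx)² − 1]. Then for every (a,b,c,d) ∈ 𝕋ₙ, the symmetric two-body Bell expression satisfies I(a,b,c,d) ≥ 0. -/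
noncomputable section

/-- The symmetric two-body Bell expression
`I(a,b,c,d) = bc + al*S0 + be*S1 + (ga/2)*S00 + de*S01 + (ep/2)*S11` at a point
`(a,b,c,d)` of `T_n`, where `S0 = a+b-c-d`, `S1 = a-b+c-d`, `Z = a-b-c+d`,
`S00 = S0^2 - n`, `S01 = S0*S1 - Z`, `S11 = S1^2 - n`. -/
def bellI (n : ℕ) (bc al be ga de ep : ℝ) (a b c d : ℤ) : ℝ :=
  bc + al * ((a + b - c - d : ℤ) : ℝ) + be * ((a - b + c - d : ℤ) : ℝ)
    + ga / 2 * (((a + b - c - d : ℤ) : ℝ) ^ 2 - n)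
    + de * (((a + b - c - d : ℤ) : ℝ) * ((a - b + c - d : ℤ) : ℝ)
        - ((a - b - c + d : ℤ) : ℝ))
    + ep / 2 * (((a - b + c - d : ℤ) : ℝ) ^ 2 - n)

/-- An odd integer has square at least one. -/
lemma one_le_sq_of_odd (k : ℤ) (h : Odd k) : 1 ≤ k ^ 2 := by
  have hk : k ≠ 0 := by
    rintro rfl
    exact (Int.not_odd_iff_even.mpr Even.zero) h
  have h1 : 1 ≤ |k| := Int.one_le_abs hk
  calc (1 : ℤ) = 1 ^ 2 := by ring
    _ ≤ |k| ^ 2 := by nlinarith [abs_nonneg k]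
    _ = k ^ 2 := sq_abs k

/-- Theorem 2 (validity of the Bell inequality class): with the parameters
`al = x(σμ + η(x+y))`, `be = μy`, `ga = x²`, `de = σxy`, `ep = y²`,
`bc = (1/2)[n(x+y)² + (σμ+ηx)² − 1]`, the Bell expression is nonnegative on `T_n`. -/
theorem stmt_2 (n : ℕ) (hn : 1 ≤ n) (σ η : ℤ) (hσ : σ = 1 ∨ σ = -1) (hη : η = 1 ∨ η = -1)
    (x y μ : ℕ)
    (hpe : Even n → Odd (μ + x)) (hpo : Odd n → Odd (μ + y))
    (a b c d : ℤ) (ha : 0 ≤ a) (hb : 0 ≤ b) (hc : 0 ≤ c) (hd : 0 ≤ d)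
    (hsum : a + b + c + d = n) :
    0 ≤ bellI n
        (((n : ℝ) * ((x : ℝ) + (y : ℝ)) ^ 2 + ((σ : ℝ) * (μ : ℝ) + (η : ℝ) * (x : ℝ)) ^ 2 - 1) / 2)
        ((x : ℝ) * ((σ : ℝ) * (μ : ℝ) + (η : ℝ) * ((x : ℝ) + (y : ℝ))))
        ((μ : ℝ) * (y : ℝ))
        ((x : ℝ) ^ 2)
        ((σ : ℝ) * (x : ℝ) * (y : ℝ))
        ((y : ℝ) ^ 2) a b c d := by
  -- parity of the core quantity with σ = η = 1
  have hK' : Odd ((x : ℤ) * (a + b - c - d) + (y : ℤ) * (a - b + c - d) + (μ : ℤ) + (x : ℤ)) := by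
    rcases Nat.even_or_odd n with he | ho
    · obtain ⟨t, ht⟩ := he
      obtain ⟨m, hm⟩ := hpe ⟨t, ht⟩
      have e1 : a + b + c + d = (t : ℤ) + (t : ℤ) := by rw [hsum]; exact_mod_cast congrArg (Nat.cast : ℕ → ℤ) ht
      have e2 : (μ : ℤ) + (x : ℤ) = 2 * (m : ℤ) + 1 := by exact_mod_cast hm
      exact ⟨(x : ℤ) * ((t : ℤ) - c - d) + (y : ℤ) * ((t : ℤ) - b - d) + (m : ℤ), by
        linear_combination (x : ℤ) * e1 + (y : ℤ) * e1 + e2⟩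
    · obtain ⟨t, ht⟩ := ho
      obtain ⟨m, hm⟩ := hpo ⟨t, ht⟩
      have e1 : a + b + c + d = 2 * (t : ℤ) + 1 := by rw [hsum]; exact_mod_cast congrArg (Nat.cast : ℕ → ℤ) ht
      have e2 : (μ : ℤ) + (y : ℤ) = 2 * (m : ℤ) + 1 := by exact_mod_cast hm
      exact ⟨(x : ℤ) * ((t : ℤ) - c - d) + (y : ℤ) * ((t : ℤ) - b - d) + (x : ℤ) + (m : ℤ), by
        linear_combination (x : ℤ) * e1 + (y : ℤ) * e1 + e2⟩
  obtain ⟨r, hr⟩ := hK'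
  have hsumR : (a : ℝ) + (b : ℝ) + (c : ℝ) + (d : ℝ) = (n : ℝ) := by exact_mod_cast hsum
  have haR : (0 : ℝ) ≤ (a : ℝ) := by exact_mod_cast ha
  have hbR : (0 : ℝ) ≤ (b : ℝ) := by exact_mod_cast hb
  have hcR : (0 : ℝ) ≤ (c : ℝ) := by exact_mod_cast hc
  have hdR : (0 : ℝ) ≤ (d : ℝ) := by exact_mod_cast hd
  have hxR : (0 : ℝ) ≤ (x : ℝ) := Nat.cast_nonneg x
  have hyR : (0 : ℝ) ≤ (y : ℝ) := Nat.cast_nonneg y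
  rcases hσ with rfl | rfl <;> rcases hη with rfl | rfl
  · -- σ = 1, η = 1, w = b
    have hK : Odd ((x : ℤ) * (a + b - c - d) + (y : ℤ) * (a - b + c - d) + (μ : ℤ) + (x : ℤ)) :=
      ⟨r, hr⟩
    have h2 : (1 : ℝ) ≤ (((x : ℤ) * (a + b - c - d) + (y : ℤ) * (a - b + c - d) + (μ : ℤ) + (x : ℤ) : ℤ) : ℝ) ^ 2 := by
      exact_mod_cast one_le_sq_of_odd _ hK
    have hw : (0 : ℝ) ≤ (x : ℝ) * (y : ℝ) * (b : ℝ) := mul_nonneg (mul_nonneg hxR hyR) hbR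
    unfold bellI
    rw [← hsumR]
    push_cast at h2 ⊢
    linarith [h2, hw]
  · -- σ = 1, η = -1, w = c
    have hK : Odd ((x : ℤ) * (a + b - c - d) + (y : ℤ) * (a - b + c - d) + (μ : ℤ) - (x : ℤ)) :=
      ⟨r - x, by linarith⟩
    have h2 : (1 : ℝ) ≤ (((x : ℤ) * (a + b - c - d) + (y : ℤ) * (a - b + c - d) + (μ : ℤ) - (x : ℤ) : ℤ) : ℝ) ^ 2 := by
      exact_mod_cast one_le_sq_of_odd _ hK
    have hw : (0 : ℝ) ≤ (x : ℝ) * (y : ℝ) * (c : ℝ) := mul_nonneg (mul_nonneg hxR hyR) hcR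
    unfold bellI
    rw [← hsumR]
    push_cast at h2 ⊢
    linarith [h2, hw]
  · -- σ = -1, η = 1, w = a
    have hK : Odd ((x : ℤ) * (a + b - c - d) - (y : ℤ) * (a - b + c - d) - (μ : ℤ) + (x : ℤ)) :=
      ⟨r - (y : ℤ) * (a - b + c - d) - (μ : ℤ), by linarith⟩
    have h2 : (1 : ℝ) ≤ (((x : ℤ) * (a + b - c - d) - (y : ℤ) * (a - b + c - d) - (μ : ℤ) + (x : ℤ) : ℤ) : ℝ) ^ 2 := by
      exact_mod_cast one_le_sq_of_odd _ hK
    have hw : (0 : ℝ) ≤ (x : ℝ) * (y : ℝ) * (a : ℝ) := mul_nonneg (mul_nonneg hxR hyR) haR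
    unfold bellI
    rw [← hsumR]
    push_cast at h2 ⊢
    linarith [h2, hw]
  · -- σ = -1, η = -1, w = d
    have hK : Odd ((x : ℤ) * (a + b - c - d) - (y : ℤ) * (a - b + c - d) - (μ : ℤ) - (x : ℤ)) :=
      ⟨r - (y : ℤ) * (a - b + c - d) - (μ : ℤ) - (x : ℤ), by linarith⟩
    have h2 : (1 : ℝ) ≤ (((x : ℤ) * (a + b - c - d) - (y : ℤ) * (a - b + c - d) - (μ : ℤ) - (x : ℤ) : ℤ) : ℝ) ^ 2 := by
      exact_mod_cast one_le_sq_of_odd _ hK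
    have hw : (0 : ℝ) ≤ (x : ℝ) * (y : ℝ) * (d : ℝ) := mul_nonneg (mul_nonneg hxR hyR) hdR
    unfold bellI
    rw [← hsumR]
    push_cast at h2 ⊢
    linarith [h2, hw]
end
end

section
/- Let n ≥ 1, σ, η ∈ {−1, 1}, and x, y, μ ∈ ℤ. With parameters α = x·(σμ + η(x+y)), β = μ·y, γ = x², δ = σ·x·y, ε = y², βc = (1/2)·[n(x+y)² + (σμ + ηx)² − 1], the following identity holds for every (a,b,c,d) ∈ 𝕋ₙ: I(a,b,c,d) = (1/2)·(x·S₀ + σ·y·S₁ + σμ + ηx)² + x·y·(η·S₀ − η·σ·S₁ − σ·Z + n) − 1/2. Moreover, the quantity (η·S₀ − η·σ·S₁ − σ·Z + n)/4 equals b if (σ,η) = (1,1), equals c if (σ,η) = (1,−1), equals a if (σ,η) = (−1,1), and equals d if (σ,η) = (−1,−1). -/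
noncomputable section

/-- Theorem 3: algebraic identity for the Bell expression of the inequality class, and
identification of the quantity `(η·S₀ − η·σ·S₁ − σ·Z + n)/4` with one of `a,b,c,d`
according to the signs `(σ,η)`. -/
theorem stmt_3 (n : ℕ) (hn : 1 ≤ n) (σ η : ℤ) (hσ : σ = 1 ∨ σ = -1) (hη : η = 1 ∨ η = -1)
    (x y μ : ℤ)
    (a b c d : ℤ) (ha : 0 ≤ a) (hb : 0 ≤ b) (hc : 0 ≤ c) (hd : 0 ≤ d)
    (hsum : a + b + c + d = n) :
    (bellI n
        (((n : ℝ) * ((x : ℝ) + (y : ℝ)) ^ 2 + ((σ : ℝ) * (μ : ℝ) + (η : ℝ) * (x : ℝ)) ^ 2 - 1) / 2)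
        ((x : ℝ) * ((σ : ℝ) * (μ : ℝ) + (η : ℝ) * ((x : ℝ) + (y : ℝ))))
        ((μ : ℝ) * (y : ℝ))
        ((x : ℝ) ^ 2)
        ((σ : ℝ) * (x : ℝ) * (y : ℝ))
        ((y : ℝ) ^ 2) a b c d
      = 1 / 2 * ((x : ℝ) * ((a + b - c - d : ℤ) : ℝ) + (σ : ℝ) * (y : ℝ) * ((a - b + c - d : ℤ) : ℝ)
            + (σ : ℝ) * (μ : ℝ) + (η : ℝ) * (x : ℝ)) ^ 2
        + (x : ℝ) * (y : ℝ) * ((η : ℝ) * ((a + b - c - d : ℤ) : ℝ)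
            - (η : ℝ) * (σ : ℝ) * ((a - b + c - d : ℤ) : ℝ)
            - (σ : ℝ) * ((a - b - c + d : ℤ) : ℝ) + (n : ℝ))
        - 1 / 2)
    ∧ (σ = 1 → η = 1 →
        η * (a + b - c - d) - η * σ * (a - b + c - d) - σ * (a - b - c + d) + (n : ℤ) = 4 * b)
    ∧ (σ = 1 → η = -1 →
        η * (a + b - c - d) - η * σ * (a - b + c - d) - σ * (a - b - c + d) + (n : ℤ) = 4 * c)
    ∧ (σ = -1 → η = 1 →
        η * (a + b - c - d) - η * σ * (a - b + c - d) - σ * (a - b - c + d) + (n : ℤ) = 4 * a)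
    ∧ (σ = -1 → η = -1 →
        η * (a + b - c - d) - η * σ * (a - b + c - d) - σ * (a - b - c + d) + (n : ℤ) = 4 * d) := by
  have hnz : (n : ℤ) = a + b + c + d := hsum.symm
  have hnr : (n : ℝ) = (a : ℝ) + b + c + d := by exact_mod_cast congrArg (Int.cast : ℤ → ℝ) hnz
  refine ⟨?_, ?_, ?_, ?_, ?_⟩
  · rcases hσ with rfl | rfl <;> rcases hη with rfl | rfl <;>
      · simp only [bellI, hnr]; push_cast; ring
  all_goals (rintro rfl rfl; omega)
end
end

section
/- Let n ≥ 1, σ, η ∈ {−1, 1}, and let x, y, μ be natural numbers with x ≥ 1 and y ≥ 1 such that μ has opposite parity to x when n is even and μ has opposite parity to y when n is odd. With parameters α = x·(σμ + η(x+y)), β = μ·y, γ = x², δ = σ·x·y, ε = y², βc = (1/2)·[n(x+y)² + (σμ + ηx)² − 1], a point (a,b,c,d) ∈ 𝕋ₙ satisfies I(a,b,c,d) = 0 if and only if both η·S₀ − η·σ·S₁ − σ·Z + n = 0 and (x·S₀ + σ·y·S₁ + σμ + ηx)² = 1. -/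
noncomputable section

set_option maxHeartbeats 1000000 in
/-- Theorem 5: characterization of the points of `T_n` saturating the Bell inequality
of the class: `I = 0` iff `η·S₀ − η·σ·S₁ − σ·Z + n = 0` and
`(x·S₀ + σ·y·S₁ + σμ + ηx)² = 1`. -/
theorem stmt_5 (n : ℕ) (hn : 1 ≤ n) (σ η : ℤ) (hσ : σ = 1 ∨ σ = -1) (hη : η = 1 ∨ η = -1)
    (x y μ : ℕ) (hx : 1 ≤ x) (hy : 1 ≤ y)
    (hpe : Even n → Odd (μ + x)) (hpo : Odd n → Odd (μ + y))
    (a b c d : ℤ) (ha : 0 ≤ a) (hb : 0 ≤ b) (hc : 0 ≤ c) (hd : 0 ≤ d)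
    (hsum : a + b + c + d = n) :
    bellI n
        (((n : ℝ) * ((x : ℝ) + (y : ℝ)) ^ 2 + ((σ : ℝ) * (μ : ℝ) + (η : ℝ) * (x : ℝ)) ^ 2 - 1) / 2)
        ((x : ℝ) * ((σ : ℝ) * (μ : ℝ) + (η : ℝ) * ((x : ℝ) + (y : ℝ))))
        ((μ : ℝ) * (y : ℝ))
        ((x : ℝ) ^ 2)
        ((σ : ℝ) * (x : ℝ) * (y : ℝ))
        ((y : ℝ) ^ 2) a b c d = 0
      ↔ (η * (a + b - c - d) - η * σ * (a - b + c - d) - σ * (a - b - c + d) + (n : ℤ) = 0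
          ∧ ((x : ℤ) * (a + b - c - d) + σ * (y : ℤ) * (a - b + c - d)
              + σ * (μ : ℤ) + η * (x : ℤ)) ^ 2 = 1) := by
  have hn' : (n : ℤ) = a + b + c + d := by omega
  have hnR : (n : ℝ) = (a : ℝ) + b + c + d := by exact_mod_cast congrArg (Int.cast : ℤ → ℝ) hn'
  set K : ℤ := η * (a + b - c - d) - η * σ * (a - b + c - d) - σ * (a - b - c + d) + (n : ℤ)
    with hKdef
  set L : ℤ := (x : ℤ) * (a + b - c - d) + σ * (y : ℤ) * (a - b + c - d)
      + σ * (μ : ℤ) + η * (x : ℤ) with hLdef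
  have hkey : bellI n
      (((n : ℝ) * ((x : ℝ) + (y : ℝ)) ^ 2 + ((σ : ℝ) * (μ : ℝ) + (η : ℝ) * (x : ℝ)) ^ 2 - 1) / 2)
      ((x : ℝ) * ((σ : ℝ) * (μ : ℝ) + (η : ℝ) * ((x : ℝ) + (y : ℝ))))
      ((μ : ℝ) * (y : ℝ)) ((x : ℝ) ^ 2) ((σ : ℝ) * (x : ℝ) * (y : ℝ)) ((y : ℝ) ^ 2) a b c d
      = ((L ^ 2 - 1 + 2 * ((x : ℤ) * (y : ℤ)) * K : ℤ) : ℝ) / 2 := by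
    rcases hσ with h1 | h1 <;> rcases hη with h2 | h2 <;> subst h1 <;> subst h2 <;>
      simp only [bellI, hLdef, hKdef] <;> push_cast <;> rw [hnR] <;> ring
  have hKnn : 0 ≤ K := by
    rw [hKdef]
    rcases hσ with h1 | h1 <;> rcases hη with h2 | h2 <;> subst h1 <;> subst h2 <;> omega
  have hxZ : (1 : ℤ) ≤ (x : ℤ) := by exact_mod_cast hx
  have hyZ : (1 : ℤ) ≤ (y : ℤ) := by exact_mod_cast hy
  -- L is odd, hence nonzero, hence L^2 ≥ 1
  have hσd : σ - 1 = 2 * (if σ = 1 then 0 else -1) := by rcases hσ with h | h <;> simp [h]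
  have hηd : η - 1 = 2 * (if η = 1 then 0 else -1) := by rcases hη with h | h <;> simp [h]
  set s : ℤ := if σ = 1 then 0 else -1
  set e : ℤ := if η = 1 then 0 else -1
  have h2 : L - ((μ : ℤ) + (x : ℤ) + (x : ℤ) * (n : ℤ) + (y : ℤ) * (n : ℤ))
      = 2 * (-(x : ℤ) * (c + d) + s * ((y : ℤ) * (a - b + c - d) + (μ : ℤ)) - (y : ℤ) * (b + d)
          + e * (x : ℤ)) := by
    rw [hLdef]
    linear_combination ((y : ℤ) * (a - b + c - d) + (μ : ℤ)) * hσd + (x : ℤ) * hηd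
      - ((x : ℤ) + (y : ℤ)) * hn'
  have hL1 : 1 ≤ L ^ 2 := by
    have hLne : L ≠ 0 := by
      intro hL0
      rw [hL0] at h2
      rcases Nat.even_or_odd n with ⟨t, ht⟩ | ⟨t, ht⟩
      · obtain ⟨m, hm⟩ := hpe ⟨t, ht⟩
        have hm' : (μ : ℤ) + (x : ℤ) = 2 * (m : ℤ) + 1 := by exact_mod_cast hm
        have hnt : (n : ℤ) = (t : ℤ) + (t : ℤ) := by exact_mod_cast ht
        have hp : (x : ℤ) * (n : ℤ) = 2 * ((x : ℤ) * (t : ℤ)) := by rw [hnt]; ring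
        have hq : (y : ℤ) * (n : ℤ) = 2 * ((y : ℤ) * (t : ℤ)) := by rw [hnt]; ring
        rw [hp, hq] at h2
        omega
      · obtain ⟨m, hm⟩ := hpo ⟨t, ht⟩
        have hm' : (μ : ℤ) + (y : ℤ) = 2 * (m : ℤ) + 1 := by exact_mod_cast hm
        have hp : (x : ℤ) * (n : ℤ) = 2 * ((x : ℤ) * (t : ℤ)) + (x : ℤ) := by
          have : (n : ℤ) = 2 * (t : ℤ) + 1 := by exact_mod_cast ht
          rw [this]; ring
        have hq : (y : ℤ) * (n : ℤ) = 2 * ((y : ℤ) * (t : ℤ)) + (y : ℤ) := by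
          have : (n : ℤ) = 2 * (t : ℤ) + 1 := by exact_mod_cast ht
          rw [this]; ring
        rw [hp, hq] at h2
        omega
    rcases hLne.lt_or_gt with h | h <;> nlinarith
  rw [hkey]
  clear hkey h2
  constructor
  · intro h
    have h0 : (L ^ 2 - 1 + 2 * ((x : ℤ) * (y : ℤ)) * K : ℤ) = 0 := by
      have := (div_eq_zero_iff.mp h).resolve_right (by norm_num)
      exact_mod_cast this
    have hxy : (1 : ℤ) ≤ (x : ℤ) * (y : ℤ) := by
      have := mul_le_mul hxZ hyZ zero_le_one (le_trans zero_le_one hxZ)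
      simpa using this
    have hprod : K ≤ (x : ℤ) * (y : ℤ) * K := by
      calc K = 1 * K := (one_mul K).symm
        _ ≤ (x : ℤ) * (y : ℤ) * K := mul_le_mul_of_nonneg_right hxy hKnn
    have hK0 : K = 0 := le_antisymm (by linarith) hKnn
    refine ⟨hK0, ?_⟩
    rw [hK0] at h0
    linarith
  · rintro ⟨h1, h1'⟩
    rw [h1, h1']
    norm_num
end
end

section
/- Let n ≥ 1 and let k be an integer with 0 ≤ k ≤ (n−1)/2. With parameters βc = (1+2k)·[(n−2k−1)² + n − 1], α = β = (1+2k)·(n−1−2k), γ = ε = k, δ = k+1, the symmetric two-body Bell expression satisfies I(a,b,c,d) ≥ 0 for every (a,b,c,d) ∈ 𝕋ₙ. -/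
noncomputable section

lemma key_int (k a b c : ℤ) (hk : 0 ≤ k) (ha : 0 ≤ a) (hb : 0 ≤ b) (hc : 0 ≤ c) :
    0 ≤ (2*k+1)*(2*a+b+c-2*k-1)^2 - (b-c)^2 + 2*(k+1)*(b+c) - (2*k+1) := by
  have hy : (b-c)^2 ≤ (b+c)^2 := by nlinarith [mul_nonneg hb hc]
  rcases eq_or_lt_of_le (by omega : 0 ≤ b + c) with h0 | h1
  · -- b + c = 0
    have hb0 : b = 0 := by omega
    have hc0 : c = 0 := by omega
    subst hb0; subst hc0
    have ht : 2*a - 2*k - 1 ≤ -1 ∨ 1 ≤ 2*a - 2*k - 1 := by omega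
    have ht2 : 1 ≤ (2*a+0+0-2*k-1)^2 := by
      rcases ht with h | h <;> nlinarith
    nlinarith
  · rcases le_or_gt (b + c) (2*k+1) with h2 | h2
    · -- 1 ≤ b+c ≤ 2k+1
      nlinarith [sq_nonneg (2*a+b+c-2*k-1), mul_nonneg (by omega : (0:ℤ) ≤ b+c-1)
        (by omega : (0:ℤ) ≤ 2*k+1-(b+c))]
    · -- b+c ≥ 2k+2
      have hu : 1 ≤ b+c-2*k-1 := by omega
      have htu : b+c-2*k-1 ≤ 2*a+b+c-2*k-1 := by omega
      have ht2 : (b+c-2*k-1)^2 ≤ (2*a+b+c-2*k-1)^2 := by nlinarith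
      nlinarith [mul_nonneg (mul_nonneg hk (by omega : (0:ℤ) ≤ b+c-2*k-1))
        (by omega : (0:ℤ) ≤ b+c-2*k-2)]

/-- Theorem (class of Bell inequalities detecting Dicke states with few excitations):
with `bc = (1+2k)[(n−2k−1)²+n−1]`, `al = be = (1+2k)(n−1−2k)`, `ga = ep = k`, `de = k+1`,
the Bell expression is nonnegative on `T_n`. -/
theorem stmt_14 (n : ℕ) (hn : 1 ≤ n) (k : ℕ) (hk : 2 * k + 1 ≤ n)
    (a b c d : ℤ) (ha : 0 ≤ a) (hb : 0 ≤ b) (hc : 0 ≤ c) (hd : 0 ≤ d)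
    (hsum : a + b + c + d = n) :
    0 ≤ bellI n
        ((1 + 2 * (k : ℝ)) * (((n : ℝ) - 2 * (k : ℝ) - 1) ^ 2 + (n : ℝ) - 1))
        ((1 + 2 * (k : ℝ)) * ((n : ℝ) - 1 - 2 * (k : ℝ)))
        ((1 + 2 * (k : ℝ)) * ((n : ℝ) - 1 - 2 * (k : ℝ)))
        (k : ℝ) ((k : ℝ) + 1) (k : ℝ) a b c d := by
  have key := key_int (k : ℤ) a b c (by positivity) ha hb hc
  have key' : (0:ℝ) ≤ (2*(k:ℝ)+1)*(2*(a:ℝ)+b+c-2*(k:ℝ)-1)^2 - ((b:ℝ)-c)^2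
      + 2*((k:ℝ)+1)*((b:ℝ)+c) - (2*(k:ℝ)+1) := by exact_mod_cast key
  have hn' : (n:ℝ) = (a:ℝ) + b + c + d := by exact_mod_cast hsum.symm
  have heq : bellI n
        ((1 + 2 * (k : ℝ)) * (((n : ℝ) - 2 * (k : ℝ) - 1) ^ 2 + (n : ℝ) - 1))
        ((1 + 2 * (k : ℝ)) * ((n : ℝ) - 1 - 2 * (k : ℝ)))
        ((1 + 2 * (k : ℝ)) * ((n : ℝ) - 1 - 2 * (k : ℝ)))
        (k : ℝ) ((k : ℝ) + 1) (k : ℝ) a b c d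
      = (2*(k:ℝ)+1)*(2*(a:ℝ)+b+c-2*(k:ℝ)-1)^2 - ((b:ℝ)-c)^2
      + 2*((k:ℝ)+1)*((b:ℝ)+c) - (2*(k:ℝ)+1) := by
    simp only [bellI, hn']
    push_cast
    ring
  rw [heq]
  exact key'
end
end

section
/- Let n ≥ 2 be even and let k be an integer with 0 ≤ k ≤ n/2 − 1; set ν = n/2 − k. With parameters βc = (n(n−1)/2)·[n + 2(2ν² + 1)], α = 2ν·n·(n−1), β = 2ν·(n−1), γ = n(n−1), δ = n, ε = −2, the symmetric two-body Bell expression satisfies I(a,b,c,d) ≥ 0 for every (a,b,c,d) ∈ 𝕋ₙ. -/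
noncomputable section

lemma int_mul_sub_one_nonneg (x : ℤ) : 0 ≤ x * (x - 1) := by
  rcases le_or_gt x 0 with h | h
  · nlinarith
  · exact mul_nonneg (by omega) (by omega)

lemma int_mul_add_one_nonneg (x : ℤ) : 0 ≤ x * (x + 1) := by
  rcases le_or_gt x 0 with h | h
  · rcases le_or_gt x (-1) with h' | h'
    · nlinarith
    · have : x = 0 := by omega
      simp [this]
  · exact mul_nonneg (by omega) (by omega)

/-- Theorem (even `n` case of the class detecting Dicke states with `k` near `n/2`):
with `ν = n/2 − k` and parameters `bc = (n(n−1)/2)(n+2(2ν²+1))`, `al = 2νn(n−1)`,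
`be = 2ν(n−1)`, `ga = n(n−1)`, `de = n`, `ep = −2`, the Bell expression is nonnegative
on `T_n`. -/
theorem stmt_16 (n : ℕ) (hn : 2 ≤ n) (he : Even n) (k : ℕ) (hk : k + 1 ≤ n / 2)
    (ν : ℕ) (hν : ν = n / 2 - k)
    (a b c d : ℤ) (ha : 0 ≤ a) (hb : 0 ≤ b) (hc : 0 ≤ c) (hd : 0 ≤ d)
    (hsum : a + b + c + d = n) :
    0 ≤ bellI n
        ((n : ℝ) * ((n : ℝ) - 1) / 2 * ((n : ℝ) + 2 * (2 * (ν : ℝ) ^ 2 + 1)))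
        (2 * (ν : ℝ) * (n : ℝ) * ((n : ℝ) - 1))
        (2 * (ν : ℝ) * ((n : ℝ) - 1))
        ((n : ℝ) * ((n : ℝ) - 1))
        (n : ℝ)
        (-2) a b c d := by
  obtain ⟨m, hm⟩ := he
  -- real versions of the hypotheses
  have hA : (0:ℝ) ≤ (a:ℝ) := by exact_mod_cast ha
  have hB : (0:ℝ) ≤ (b:ℝ) := by exact_mod_cast hb
  have hC : (0:ℝ) ≤ (c:ℝ) := by exact_mod_cast hc
  have hD : (0:ℝ) ≤ (d:ℝ) := by exact_mod_cast hd
  have hnR : (n:ℝ) = (a:ℝ) + b + c + d := by exact_mod_cast hsum.symm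
  have hmR : (n:ℝ) = 2 * (m:ℝ) := by
    have : n = 2 * m := by omega
    exact_mod_cast this
  -- the integer combination whose integrality is essential
  set H : ℤ := (m:ℤ) + ν - c - d with hHdef
  have hHR : (H:ℝ) = ((a:ℝ) + b - c - d) / 2 + (ν:ℝ) := by
    have hmZ : (a:ℝ) + b + c + d = 2 * (m:ℝ) := by rw [← hnR]; exact hmR
    push_cast [hHdef]
    linarith
  have h1 : (0:ℝ) ≤ (H:ℝ) * ((H:ℝ) + 1) := by
    have := int_mul_add_one_nonneg H
    exact_mod_cast this
  have h2 : (0:ℝ) ≤ (H:ℝ) * ((H:ℝ) - 1) := by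
    have := int_mul_sub_one_nonneg H
    exact_mod_cast this
  have hn1 : (1:ℝ) ≤ (n:ℝ) := by exact_mod_cast Nat.one_le_of_lt hn
  have hnpos : (0:ℝ) < (n:ℝ) := by linarith
  -- key algebraic identity
  have key : (n:ℝ) * bellI n
        ((n : ℝ) * ((n : ℝ) - 1) / 2 * ((n : ℝ) + 2 * (2 * (ν : ℝ) ^ 2 + 1)))
        (2 * (ν : ℝ) * (n : ℝ) * ((n : ℝ) - 1))
        (2 * (ν : ℝ) * ((n : ℝ) - 1))
        ((n : ℝ) * ((n : ℝ) - 1))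
        (n : ℝ)
        (-2) a b c d
      = 2 * (n:ℝ) * ((n:ℝ) - 1) *
          ((H:ℝ) * ((H:ℝ) + 1) * ((a:ℝ) + c) + (H:ℝ) * ((H:ℝ) - 1) * ((b:ℝ) + d))
        + 4 * (a:ℝ) * b * ((a:ℝ) + b + d) + 4 * (c:ℝ) * d * ((a:ℝ) + c + d)
        + 8 * ((a:ℝ) + b + c + d) * b * c + 4 * (b:ℝ) * c * ((a:ℝ) + d) := by
    simp only [bellI]
    push_cast
    rw [hHR, hnR]
    ring
  -- the right-hand side is nonnegative
  have hrhs : (0:ℝ) ≤ 2 * (n:ℝ) * ((n:ℝ) - 1) *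
          ((H:ℝ) * ((H:ℝ) + 1) * ((a:ℝ) + c) + (H:ℝ) * ((H:ℝ) - 1) * ((b:ℝ) + d))
        + 4 * (a:ℝ) * b * ((a:ℝ) + b + d) + 4 * (c:ℝ) * d * ((a:ℝ) + c + d)
        + 8 * ((a:ℝ) + b + c + d) * b * c + 4 * (b:ℝ) * c * ((a:ℝ) + d) := by
    have t1 : (0:ℝ) ≤ (H:ℝ) * ((H:ℝ) + 1) * ((a:ℝ) + c) :=
      mul_nonneg h1 (by linarith)
    have t2 : (0:ℝ) ≤ (H:ℝ) * ((H:ℝ) - 1) * ((b:ℝ) + d) :=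
      mul_nonneg h2 (by linarith)
    have t3 : (0:ℝ) ≤ 4 * (a:ℝ) * b * ((a:ℝ) + b + d) := by positivity
    have t4 : (0:ℝ) ≤ 4 * (c:ℝ) * d * ((a:ℝ) + c + d) := by positivity
    have t5 : (0:ℝ) ≤ 8 * ((a:ℝ) + b + c + d) * b * c := by positivity
    have t6 : (0:ℝ) ≤ 4 * (b:ℝ) * c * ((a:ℝ) + d) := by positivity
    have t0 : (0:ℝ) ≤ 2 * (n:ℝ) * ((n:ℝ) - 1) *
          ((H:ℝ) * ((H:ℝ) + 1) * ((a:ℝ) + c) + (H:ℝ) * ((H:ℝ) - 1) * ((b:ℝ) + d)) := by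
      have : (0:ℝ) ≤ 2 * (n:ℝ) * ((n:ℝ) - 1) := by nlinarith
      exact mul_nonneg this (by linarith)
    linarith
  have := hrhs
  rw [← key] at this
  exact nonneg_of_mul_nonneg_right this hnpos
end
end

section
/- Let n ≥ 3 be odd and let k be an integer with 0 ≤ k ≤ (n−1)/2 − 1; set ν = (n−1)/2 − k. With parameters βc = (n(n−1)/2)·[n + 3 + 4ν(ν+1)], α = (1+2ν)·n·(n−1), β = (1+2ν)·(n−1), γ = n(n−1), δ = n, ε = −2, the symmetric two-body Bell expression satisfies I(a,b,c,d) ≥ 0 for every (a,b,c,d) ∈ 𝕋ₙ. -/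
noncomputable section

/-- Abbreviation for the Bell expression with the specific parameters of the theorem. -/
def Jb (n ν : ℕ) (a b c d : ℤ) : ℝ :=
  bellI n
    ((n : ℝ) * ((n : ℝ) - 1) / 2 * ((n : ℝ) + 3 + 4 * (ν : ℝ) * ((ν : ℝ) + 1)))
    ((1 + 2 * (ν : ℝ)) * (n : ℝ) * ((n : ℝ) - 1))
    ((1 + 2 * (ν : ℝ)) * ((n : ℝ) - 1))
    ((n : ℝ) * ((n : ℝ) - 1))
    (n : ℝ)
    (-2) a b c d

lemma shift_b (n ν : ℕ) (a b c d : ℤ) :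
    Jb n ν a b c d = Jb n ν (a + b) 0 (c - b) (d + b) + 4 * (n : ℝ) * (b : ℝ) := by
  unfold Jb bellI; push_cast; ring

lemma shift_c (n ν : ℕ) (a b c d : ℤ) :
    Jb n ν a b c d = Jb n ν (a + c) (b - c) 0 (d + c) + 4 * (n : ℝ) * (c : ℝ) := by
  unfold Jb bellI; push_cast; ring

lemma interpB (n ν : ℕ) (a c d : ℤ) (h : a + c + d = (n : ℤ)) :
    ((c : ℝ) + d) * Jb n ν a 0 c d
      = (d : ℝ) * Jb n ν a 0 0 (c + d) + (c : ℝ) * Jb n ν a 0 (c + d) 0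
        + 4 * (c : ℝ) * (d : ℝ) * ((c : ℝ) + d) := by
  have ha : (a : ℝ) = (n : ℝ) - c - d := by
    have := congrArg (fun z : ℤ => (z : ℝ)) h
    push_cast at this; linarith
  unfold Jb bellI; push_cast; rw [ha]; ring

lemma interpC (n ν : ℕ) (a b d : ℤ) (h : a + b + d = (n : ℤ)) :
    ((a : ℝ) + b) * Jb n ν a b 0 d
      = (b : ℝ) * Jb n ν 0 (a + b) 0 d + (a : ℝ) * Jb n ν (a + b) 0 0 d
        + 4 * (a : ℝ) * (b : ℝ) * ((a : ℝ) + b) := by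
  have hd : (d : ℝ) = (n : ℝ) - a - b := by
    have := congrArg (fun z : ℤ => (z : ℝ)) h
    push_cast at this; linarith
  unfold Jb bellI; push_cast; rw [hd]; ring

lemma cornerL0 (n ν : ℕ) (hn : 1 ≤ n) (ho : Odd n) (a c : ℤ) (h : a + c = (n : ℤ)) :
    0 ≤ Jb n ν a 0 c 0 := by
  have hcR : (c : ℝ) = (n : ℝ) - a := by
    have := congrArg (fun z : ℤ => (z : ℝ)) h
    push_cast at this; linarith
  have hid : Jb n ν a 0 c 0
      = (n : ℝ) * ((n : ℝ) - 1) / 2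
        * (((a - c + 2 * (ν : ℤ) + 1 : ℤ) : ℝ) * ((a - c + 2 * (ν : ℤ) + 3 : ℤ) : ℝ)) := by
    unfold Jb bellI; push_cast; rw [hcR]; ring
  have key : (0 : ℤ) ≤ (a - c + 2 * (ν : ℤ) + 1) * (a - c + 2 * (ν : ℤ) + 3) := by
    obtain ⟨m, hm⟩ := ho
    have hpar : (2 : ℤ) ∣ (a - c + 2 * (ν : ℤ) + 1) := by omega
    obtain ⟨t, ht⟩ := hpar
    rcases le_or_gt t (-1) with h' | h' <;> nlinarith
  rw [hid]
  have h1 : (0 : ℝ) ≤ (n : ℝ) * ((n : ℝ) - 1) / 2 := by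
    have : (1 : ℝ) ≤ (n : ℝ) := by exact_mod_cast hn
    nlinarith
  have h2 : (0 : ℝ) ≤ ((a - c + 2 * (ν : ℤ) + 1 : ℤ) : ℝ) * ((a - c + 2 * (ν : ℤ) + 3 : ℤ) : ℝ) := by
    rw [← Int.cast_mul]; exact_mod_cast key
  exact mul_nonneg h1 h2

lemma cornerL3 (n ν : ℕ) (hn : 1 ≤ n) (ho : Odd n) (b d : ℤ) (h : b + d = (n : ℤ)) :
    0 ≤ Jb n ν 0 b 0 d := by
  have hdR : (d : ℝ) = (n : ℝ) - b := by
    have := congrArg (fun z : ℤ => (z : ℝ)) h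
    push_cast at this; linarith
  have hid : Jb n ν 0 b 0 d
      = (n : ℝ) * ((n : ℝ) - 1) / 2
        * (((b - d + 2 * (ν : ℤ) - 1 : ℤ) : ℝ) * ((b - d + 2 * (ν : ℤ) + 1 : ℤ) : ℝ)) := by
    unfold Jb bellI; push_cast; rw [hdR]; ring
  have key : (0 : ℤ) ≤ (b - d + 2 * (ν : ℤ) - 1) * (b - d + 2 * (ν : ℤ) + 1) := by
    obtain ⟨m, hm⟩ := ho
    have hpar : (2 : ℤ) ∣ (b - d + 2 * (ν : ℤ) - 1) := by omega
    obtain ⟨t, ht⟩ := hpar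
    rcases le_or_gt t (-1) with h' | h' <;> nlinarith
  rw [hid]
  have h1 : (0 : ℝ) ≤ (n : ℝ) * ((n : ℝ) - 1) / 2 := by
    have : (1 : ℝ) ≤ (n : ℝ) := by exact_mod_cast hn
    nlinarith
  have h2 : (0 : ℝ) ≤ ((b - d + 2 * (ν : ℤ) - 1 : ℤ) : ℝ) * ((b - d + 2 * (ν : ℤ) + 1 : ℤ) : ℝ) := by
    rw [← Int.cast_mul]; exact_mod_cast key
  exact mul_nonneg h1 h2

lemma cornerL1 (n ν : ℕ) (hn : 1 ≤ n) (ho : Odd n) (hν : 2 * ν + 1 ≤ n)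
    (a d : ℤ) (h : a + d = (n : ℤ)) :
    0 ≤ Jb n ν a 0 0 d := by
  have hdR : (d : ℝ) = (n : ℝ) - a := by
    have := congrArg (fun z : ℤ => (z : ℝ)) h
    push_cast at this; linarith
  have hid : Jb n ν a 0 0 d
      = ((n : ℝ) - 1) / 2
        * (((a - d + 2 * (ν : ℤ) + 1 : ℤ) : ℝ)
            * ((((n : ℤ) + 2) * (a - d) + (2 * (ν : ℤ) + 1) * (n : ℤ) : ℤ) : ℝ)) := by
    unfold Jb bellI; push_cast; rw [hdR]; ring
  have hν' : 2 * (ν : ℤ) + 1 ≤ (n : ℤ) := by exact_mod_cast hν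
  have key : (0 : ℤ) ≤ (a - d + 2 * (ν : ℤ) + 1)
      * (((n : ℤ) + 2) * (a - d) + (2 * (ν : ℤ) + 1) * (n : ℤ)) := by
    obtain ⟨m, hm⟩ := ho
    have hn' : (1 : ℤ) ≤ (n : ℤ) := by exact_mod_cast hn
    have hpar : (2 : ℤ) ∣ (a - d + 2 * (ν : ℤ) + 1) := by omega
    rcases le_or_gt (a - d + 2 * (ν : ℤ) + 1) 0 with h1 | h1
    · -- both factors nonpositive
      have h2 : ((n : ℤ) + 2) * (a - d) + (2 * (ν : ℤ) + 1) * (n : ℤ) ≤ 0 := by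
        nlinarith
      nlinarith
    · -- a - d + 2ν + 1 ≥ 2, so a - d ≥ 1 - 2ν
      have h1' : 2 ≤ a - d + 2 * (ν : ℤ) + 1 := by omega
      have h2 : 0 ≤ ((n : ℤ) + 2) * (a - d) + (2 * (ν : ℤ) + 1) * (n : ℤ) := by
        nlinarith
      nlinarith
  rw [hid]
  have h1 : (0 : ℝ) ≤ ((n : ℝ) - 1) / 2 := by
    have : (1 : ℝ) ≤ (n : ℝ) := by exact_mod_cast hn
    linarith
  have h2 : (0 : ℝ) ≤ ((a - d + 2 * (ν : ℤ) + 1 : ℤ) : ℝ)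
      * ((((n : ℤ) + 2) * (a - d) + (2 * (ν : ℤ) + 1) * (n : ℤ) : ℤ) : ℝ) := by
    rw [← Int.cast_mul]; exact_mod_cast key
  exact mul_nonneg h1 h2

lemma mainJ (n ν : ℕ) (hn : 3 ≤ n) (ho : Odd n) (hν : 2 * ν + 1 ≤ n)
    (a b c d : ℤ) (ha : 0 ≤ a) (hb : 0 ≤ b) (hc : 0 ≤ c) (hd : 0 ≤ d)
    (hsum : a + b + c + d = n) :
    0 ≤ Jb n ν a b c d := by
  have hn1 : 1 ≤ n := by omega
  have hnR : (0 : ℝ) ≤ (n : ℝ) := by positivity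
  rcases le_total b c with hbc | hcb
  · rw [shift_b n ν a b c d]
    have hbR : (0 : ℝ) ≤ (b : ℝ) := by exact_mod_cast hb
    have hmain : 0 ≤ Jb n ν (a + b) 0 (c - b) (d + b) := by
      set A := a + b with hA
      set C := c - b with hC
      set D := d + b with hD
      have hsum' : A + C + D = (n : ℤ) := by omega
      have hC0 : 0 ≤ C := by omega
      have hD0 : 0 ≤ D := by omega
      rcases eq_or_lt_of_le (by omega : (0 : ℤ) ≤ C + D) with hCD | hCD
      · have hC' : C = 0 := by omega
        have hD' : D = 0 := by omega
        rw [hC', hD']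
        exact cornerL0 n ν hn1 ho A 0 (by omega)
      · have h1 := cornerL1 n ν hn1 ho hν A (C + D) (by omega)
        have h0 := cornerL0 n ν hn1 ho A (C + D) (by omega)
        have hI := interpB n ν A C D hsum'
        have hCR : (0 : ℝ) ≤ (C : ℝ) := by exact_mod_cast hC0
        have hDR : (0 : ℝ) ≤ (D : ℝ) := by exact_mod_cast hD0
        have hCDR : (0 : ℝ) < (C : ℝ) + (D : ℝ) := by
          have : (0 : ℤ) < C + D := hCD
          exact_mod_cast this
        nlinarith [mul_nonneg hDR h1, mul_nonneg hCR h0,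
          mul_nonneg (mul_nonneg (mul_nonneg (by norm_num : (0:ℝ) ≤ 4) hCR) hDR) hCDR.le]
    nlinarith
  · rw [shift_c n ν a b c d]
    have hcR : (0 : ℝ) ≤ (c : ℝ) := by exact_mod_cast hc
    have hmain : 0 ≤ Jb n ν (a + c) (b - c) 0 (d + c) := by
      set A := a + c with hA
      set B := b - c with hB
      set D := d + c with hD
      have hsum' : A + B + D = (n : ℤ) := by omega
      have hA0 : 0 ≤ A := by omega
      have hB0 : 0 ≤ B := by omega
      rcases eq_or_lt_of_le (by omega : (0 : ℤ) ≤ A + B) with hAB | hAB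
      · have hA' : A = 0 := by omega
        have hB' : B = 0 := by omega
        rw [hA', hB']
        exact cornerL3 n ν hn1 ho 0 D (by omega)
      · have h3 := cornerL3 n ν hn1 ho (A + B) D (by omega)
        have h1 := cornerL1 n ν hn1 ho hν (A + B) D (by omega)
        have hI := interpC n ν A B D hsum'
        have hAR : (0 : ℝ) ≤ (A : ℝ) := by exact_mod_cast hA0
        have hBR : (0 : ℝ) ≤ (B : ℝ) := by exact_mod_cast hB0
        have hABR : (0 : ℝ) < (A : ℝ) + (B : ℝ) := by
          have : (0 : ℤ) < A + B := hAB
          exact_mod_cast this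
        nlinarith [mul_nonneg hBR h3, mul_nonneg hAR h1,
          mul_nonneg (mul_nonneg (mul_nonneg (by norm_num : (0:ℝ) ≤ 4) hAR) hBR) hABR.le]
    nlinarith

/-- Theorem (odd `n` case of the class detecting Dicke states with `k` near `n/2`):
with `ν = (n−1)/2 − k` and parameters `bc = (n(n−1)/2)(n+3+4ν(ν+1))`,
`al = (1+2ν)n(n−1)`, `be = (1+2ν)(n−1)`, `ga = n(n−1)`, `de = n`, `ep = −2`,
the Bell expression is nonnegative on `T_n`. -/
theorem stmt_17 (n : ℕ) (hn : 3 ≤ n) (ho : Odd n) (k : ℕ) (hk : k + 1 ≤ (n - 1) / 2)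
    (ν : ℕ) (hν : ν = (n - 1) / 2 - k)
    (a b c d : ℤ) (ha : 0 ≤ a) (hb : 0 ≤ b) (hc : 0 ≤ c) (hd : 0 ≤ d)
    (hsum : a + b + c + d = n) :
    0 ≤ bellI n
        ((n : ℝ) * ((n : ℝ) - 1) / 2 * ((n : ℝ) + 3 + 4 * (ν : ℝ) * ((ν : ℝ) + 1)))
        ((1 + 2 * (ν : ℝ)) * (n : ℝ) * ((n : ℝ) - 1))
        ((1 + 2 * (ν : ℝ)) * ((n : ℝ) - 1))
        ((n : ℝ) * ((n : ℝ) - 1))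
        (n : ℝ)
        (-2) a b c d := by
  have hν' : 2 * ν + 1 ≤ n := by
    obtain ⟨m, hm⟩ := ho
    omega
  exact mainJ n ν hn ho hν' a b c d ha hb hc hd hsum
end
end
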